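/- Let S and T be strings and a, b characters with a ≠ b, such that b does not occur in S. Then the delete–replace edit distance satisfies d_DR(S ++ [a], T ++ [b]) = 1 + d_DR(S, T) (as elements of ℕ∞); that is, when the last character of the target occurs nowhere in the source, replacing the last character of the source by it is optimal. -/

import Mathlib

/-- `StepsIn R k S T` holds if there is a sequence of exactly `k` steps of the
relation `R` transforming `S` into `T`. -/
def StepsIn {α : Type*} (R : List α → List α → Prop) : ℕ → List α → List α → Prop
  | 0, S, T => S = T
  | n + 1, S, T => ∃ M, R S M ∧ StepsIn R n M T

/-- A single delete or replace operation on a string. -/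
inductive DRStep {α : Type*} : List α → List α → Prop
  | del (U V : List α) (c : α) : DRStep (U ++ [c] ++ V) (U ++ V)
  | rep (U V : List α) (a b : α) (hab : a ≠ b) : DRStep (U ++ [a] ++ V) (U ++ [b] ++ V)

/-- A single insert or replace operation on a string. -/
inductive IRStep {α : Type*} : List α → List α → Prop
  | ins (U V : List α) (c : α) : IRStep (U ++ V) (U ++ [c] ++ V)
  | rep (U V : List α) (a b : α) (hab : a ≠ b) : IRStep (U ++ [a] ++ V) (U ++ [b] ++ V)

/-- The delete–replace edit distance, as an extended natural number:
the minimum number of single-character deletions and replacements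
transforming `S` into `T`, or `⊤` if no such sequence exists. -/
noncomputable def dDR {α : Type*} (S T : List α) : ℕ∞ :=
  sInf {n : ℕ∞ | ∃ k : ℕ, StepsIn DRStep k S T ∧ n = k}

/-- The insert–replace edit distance, as an extended natural number:
the minimum number of single-character insertions and replacements
transforming `S` into `T`, or `⊤` if no such sequence exists. -/
noncomputable def dIR {α : Type*} (S T : List α) : ℕ∞ :=
  sInf {n : ℕ∞ | ∃ k : ℕ, StepsIn IRStep k S T ∧ n = k}

/-!
A delete–replace script from `S` to `T` can be normalised to an *alignment*: a subsequence `s` of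
`S` with `|s| = |T|` (the surviving characters), costing `|S| - |T|` deletions plus the number of
positions where `s` and `T` disagree. Hence `d_DR(S, T)` is the least alignment cost. The last
character of an alignment of `S ++ [a]` with `T ++ [b]` lies in `S ++ [a]`, so it differs from `b`:
dropping that last column leaves an alignment of `S` with `T` costing exactly one less. Conversely,
appending the column `(a, b)` to an alignment of `S` with `T` costs exactly one more.
-/

namespace List.Sublist

theorem dropLast {α : Type*} {l₁ l₂ : List α} (h : l₁ <+ l₂) : l₁.dropLast <+ l₂.dropLast := by
  simpa using h.reverse.tail

end List.Sublist

section Alignment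

variable {α : Type*}

theorem StepsIn.trans {R : List α → List α → Prop} :
    ∀ {k j : ℕ} {S M T : List α}, StepsIn R k S M → StepsIn R j M T → StepsIn R (k + j) S T
  | 0, _, _, _, _, rfl, h => by rwa [Nat.zero_add]
  | k + 1, j, _, _, _, ⟨M', hSM', hM'M⟩, h => by
      rw [Nat.add_right_comm]
      exact ⟨M', hSM', hM'M.trans h⟩

theorem StepsIn.map {R : List α → List α → Prop} (f : List α → List α)
    (hf : ∀ ⦃X Y⦄, R X Y → R (f X) (f Y)) :
    ∀ {k : ℕ} {X Y : List α}, StepsIn R k X Y → StepsIn R k (f X) (f Y)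
  | 0, _, _, rfl => rfl
  | _ + 1, _, _, ⟨M, hXM, hMY⟩ => ⟨f M, hf hXM, hMY.map f hf⟩

theorem DRStep.cons (c : α) ⦃X Y : List α⦄ : DRStep X Y → DRStep (c :: X) (c :: Y)
  | .del U V d => .del (c :: U) V d
  | .rep U V x y hxy => .rep (c :: U) V x y hxy

theorem stepsIn_of_sublist {s S : List α} (h : s.Sublist S) :
    StepsIn DRStep (S.length - s.length) S s := by
  induction h with
  | slnil => rfl
  | @cons l₁ l₂ a h ih =>
      rw [List.length_cons, Nat.sub_add_comm h.length_le]
      exact ⟨l₂, .del [] l₂ a, ih⟩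
  | @cons_cons l₁ l₂ a _ ih =>
      simpa using ih.map (a :: ·) (DRStep.cons a)

theorem dDR_le_of_stepsIn {S T : List α} {k : ℕ} (h : StepsIn DRStep k S T) : dDR S T ≤ k :=
  sInf_le ⟨k, h, rfl⟩

variable [DecidableEq α]

/-- The number of positions at which two lists disagree (over their common length). -/
def mismatches : List α → List α → ℕ
  | a :: s, b :: t => mismatches s t + if a = b then 0 else 1
  | _, _ => 0

@[simp]
theorem mismatches_self : ∀ s : List α, mismatches s s = 0
  | [] => rfl
  | _ :: s => by simp [mismatches, mismatches_self s]

theorem mismatches_append_cons_le :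
    ∀ (s₁ s₂ t : List α) (c d : α),
      mismatches (s₁ ++ c :: s₂) t ≤ mismatches (s₁ ++ d :: s₂) t + 1
  | _, _, [], _, _ => by cases ‹List α› <;> simp [mismatches]
  | [], s₂, y :: t, c, d => by
      simp only [List.nil_append, mismatches]
      split_ifs <;> omega
  | x :: s₁, s₂, y :: t, c, d => by
      simp only [List.cons_append, mismatches]
      have := mismatches_append_cons_le s₁ s₂ t c d
      omega

theorem mismatches_append_singleton :
    ∀ {s t : List α}, s.length = t.length → ∀ x y : α,
      mismatches (s ++ [x]) (t ++ [y]) = mismatches s t + if x = y then 0 else 1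
  | [], [], _, _, _ => by simp [mismatches]
  | _ :: s, _ :: t, h, x, y => by
      simp only [List.cons_append, mismatches,
        mismatches_append_singleton (s := s) (t := t) (by simpa using h)]
      omega

theorem stepsIn_mismatches :
    ∀ {s t : List α}, s.length = t.length → StepsIn DRStep (mismatches s t) s t
  | [], [], _ => rfl
  | a :: s, b :: t, h => by
      have ih := stepsIn_mismatches (s := s) (t := t) (by simpa using h)
      by_cases hab : a = b
      · subst hab
        simpa [mismatches] using ih.map (a :: ·) (DRStep.cons a)
      · simp only [mismatches, if_neg hab]
        exact ⟨b :: s, .rep [] s a b hab, ih.map (b :: ·) (DRStep.cons b)⟩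

/-- The cost of deleting `S` down to its subsequence `s` and then replacing the characters of `s`
that disagree with `T`. -/
def alignCost (S T s : List α) : ℕ :=
  S.length - s.length + mismatches s T

theorem stepsIn_alignCost {S T s : List α} (hs : s.Sublist S) (hlen : s.length = T.length) :
    StepsIn DRStep (alignCost S T s) S T :=
  (stepsIn_of_sublist hs).trans (stepsIn_mismatches hlen)

theorem alignCost_append_singleton {S T u : List α} (hu : u.length = T.length) (x y z : α) :
    alignCost (S ++ [x]) (T ++ [y]) (u ++ [z]) = alignCost S T u + if z = y then 0 else 1 := by
  simp only [alignCost, mismatches_append_singleton hu, List.length_append, List.length_singleton,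
    Nat.add_sub_add_right]
  omega

theorem DRStep.exists_alignCost_le {S M T s : List α} (hSM : DRStep S M) (hs : s.Sublist M) :
    ∃ s₀, s₀.Sublist S ∧ s₀.length = s.length ∧ alignCost S T s₀ ≤ alignCost M T s + 1 := by
  cases hSM with
  | del U V c =>
      have hUV : (U ++ V).Sublist (U ++ [c] ++ V) := by simp
      refine ⟨s, hs.trans hUV, rfl, ?_⟩
      have := hs.length_le
      simp only [alignCost, List.length_append, List.length_singleton] at this ⊢
      omega
  | rep U V c d _ =>
      rw [List.append_assoc, List.singleton_append] at hs
      obtain ⟨s₁, s₂, rfl, h₁, h₂⟩ := List.sublist_append_iff.mp hs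
      have hlen : (U ++ [c] ++ V).length = (U ++ [d] ++ V).length := by simp
      rcases List.sublist_cons_iff.mp h₂ with hs₂ | ⟨r, rfl, hr⟩
      · -- the replaced character was deleted afterwards, so the replacement can be skipped
        refine ⟨s₁ ++ s₂, ?_, rfl, ?_⟩
        · simpa using h₁.append (hs₂.trans (List.sublist_cons_self c V))
        · simp only [alignCost, hlen]
          omega
      · refine ⟨s₁ ++ c :: r, by simpa using h₁.append (hr.cons_cons c), by simp, ?_⟩
        have := mismatches_append_cons_le s₁ r T c d
        simp only [alignCost, hlen, List.length_append, List.length_cons] at this ⊢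
        omega

theorem StepsIn.exists_alignCost_le :
    ∀ {k : ℕ} {S T : List α}, StepsIn DRStep k S T →
      ∃ s, (s.Sublist S ∧ s.length = T.length) ∧ alignCost S T s ≤ k
  | 0, S, _, rfl => ⟨S, ⟨List.Sublist.refl S, rfl⟩, by simp [alignCost]⟩
  | k + 1, S, T, ⟨M, hSM, hMT⟩ => by
      obtain ⟨s, ⟨hs, hlen⟩, hcost⟩ := hMT.exists_alignCost_le
      obtain ⟨s₀, hs₀, hlen₀, hcost₀⟩ := hSM.exists_alignCost_le (T := T) hs
      exact ⟨s₀, ⟨hs₀, hlen₀.trans hlen⟩, by omega⟩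

theorem dDR_eq_iInf_alignCost (S T : List α) :
    dDR S T = ⨅ (s : List α) (_ : s.Sublist S ∧ s.length = T.length), (alignCost S T s : ℕ∞) := by
  refine le_antisymm (le_iInf₂ fun s ⟨hs, hlen⟩ => dDR_le_of_stepsIn (stepsIn_alignCost hs hlen)) ?_
  refine le_sInf ?_
  rintro _ ⟨k, hk, rfl⟩
  obtain ⟨s, hs, hcost⟩ := hk.exists_alignCost_le
  exact iInf₂_le_of_le s hs (by exact_mod_cast hcost)

end Alignment

theorem dDR_append_not_mem {α : Type*} [DecidableEq α] (S T : List α) (a b : α)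
    (hab : a ≠ b) (hbS : b ∉ S) :
    dDR (S ++ [a]) (T ++ [b]) = 1 + dDR S T := by
  simp only [dDR_eq_iInf_alignCost, ENat.add_iInf₂]
  refine le_antisymm (le_iInf₂ fun s ⟨hs, hlen⟩ => ?_) (le_iInf₂ fun s ⟨hs, hlen⟩ => ?_)
  · refine iInf₂_le_of_le (s ++ [a]) ⟨hs.append_right [a], by simp [hlen]⟩ ?_
    simp [alignCost_append_singleton hlen, hab, add_comm]
  · obtain rfl | ⟨u, x, rfl⟩ := s.eq_nil_or_concat
    · simp at hlen
    rw [List.concat_eq_append] at hs ⊢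
    have hu : u.length = T.length := by simpa using hlen
    have hxb : x ≠ b := by
      have hx : x ∈ S ++ [a] := hs.subset (by simp)
      rintro rfl
      rcases List.mem_append.mp hx with hxS | hxa
      · exact hbS hxS
      · exact hab (List.mem_singleton.mp hxa).symm
    refine iInf₂_le_of_le u ⟨by simpa using hs.dropLast, hu⟩ ?_
    simp [alignCost_append_singleton hu, hxb, add_comm]
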